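/- For the l⁴-norm anisotropy γ(n) = (n₁⁴+n₂⁴)^{1/4}, with ξ(n) = γ(n)⁻³(n₁³, n₂³)ᵀ, and for any n ∈ S¹ with n₁² ≠ n₂², taking n̂ = (n₂, n₁)ᵀ gives F(n, n̂) = 2γ(n)⁻³, where F(n,n̂) = [γ(n̂)² - γ(n)² + 2γ(n)(ξ·n̂^⊥)(n·n̂^⊥)]/[γ(n)(n·n̂^⊥)²]. Hence the minimal stabilizing function satisfies k₀(n) ≥ 2γ(n)⁻³. -/

import Mathlib

open Matrix

/-- Clockwise rotation by π/2. -/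
noncomputable def perp (v : Fin 2 → ℝ) : Fin 2 → ℝ := ![v 1, -v 0]

/-- The l⁴-norm anisotropy on the unit circle. -/
noncomputable def gam4 (n : Fin 2 → ℝ) : ℝ := (n 0 ^ 4 + n 1 ^ 4) ^ ((1 : ℝ) / 4)

/-- The Cahn-Hoffman vector for the l⁴-norm anisotropy. -/
noncomputable def xi4 (n : Fin 2 → ℝ) : Fin 2 → ℝ := (gam4 n ^ 3)⁻¹ • ![n 0 ^ 3, n 1 ^ 3]

/-- F(n, n̂) for the l⁴-norm anisotropy. -/
noncomputable def F4 (n m : Fin 2 → ℝ) : ℝ :=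
  (gam4 m ^ 2 - gam4 n ^ 2 + 2 * gam4 n * (xi4 n ⬝ᵥ perp m) * (n ⬝ᵥ perp m)) /
    (gam4 n * (n ⬝ᵥ perp m) ^ 2)

private lemma st_ht2 (c t : ℝ) (e0 : c^2 + t^2 = 1) : t^2 ≤ 1 := by nlinarith [sq_nonneg c]
private lemma st_g2ge (g : ℝ) (hg4ge : 1 ≤ 2*g^4) (hg0 : 0 < g) : (7:ℝ)/10 ≤ g^2 := by
  nlinarith [sq_nonneg g, sq_nonneg (g^2 - 7/10)]
private lemma st_g2le (g : ℝ) (hg4le : g^4 ≤ 1) (hg0 : 0 < g) : g^2 ≤ 1 := by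
  nlinarith [sq_nonneg g, sq_nonneg (g^2 - 1)]
private lemma st_hcd (c d : ℝ) (hc2 : c^2 ≤ 1) (hd2 : d^2 ≤ 1) : c^2*d^2 ≤ 1 := by
  nlinarith [sq_nonneg c, sq_nonneg d]
private lemma st_hti (c t d : ℝ) (hcd : c^2*d^2 ≤ 1) : c^2*t^2*d^2 ≤ t^2 := by
  nlinarith [hcd, sq_nonneg t, sq_nonneg (c*d*t)]
private lemma st_ht4u (t u : ℝ) (ht2 : t^2 ≤ 1) (hu2 : 4*u^2 ≤ 1) : t^4*u^2 ≤ t^2/4 := by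
  nlinarith [hu2, sq_nonneg t, sq_nonneg (t*t*u), sq_nonneg (t*t)]
private lemma st_bX (c t d u : ℝ) (ht4u : t^4*u^2 ≤ t^2/4) (hti : c^2*t^2*d^2 ≤ t^2) :
    (4*t^2*u - 2*c*t*d)^2 ≤ 16*t^2 := by
  nlinarith [sq_nonneg (4*t^2*u + 2*c*t*d), ht4u, hti]
private lemma st_bb (c t d u : ℝ) (ht4u : t^4*u^2 ≤ t^2/4) (hti : c^2*t^2*d^2 ≤ t^2) :
    (2*t^2*u - c*t*d)^2 ≤ 4*t^2 := by
  nlinarith [sq_nonneg (2*t^2*u + c*t*d), ht4u, hti]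
private lemma st_bY (u v : ℝ) (hu2 : 4*u^2 ≤ 1) (hv2 : 4*v^2 ≤ 1) : (u + v)^2 ≤ 1 := by
  nlinarith [sq_nonneg (u - v)]
private lemma st_p1 (c t d u v g h : ℝ)
    (e2 : (h^2 - g^2)*(h^2 + g^2) = (4*t^2*u - 2*c*t*d)*(u + v))
    (bX : (4*t^2*u - 2*c*t*d)^2 ≤ 16*t^2) (bY : (u + v)^2 ≤ 1)
    (hH2 : (1:ℝ) ≤ (h^2 + g^2)^2) :
    (h^2 - g^2)^2 ≤ 16*t^2 := by
  have bXY : ((4*t^2*u - 2*c*t*d)*(u + v))^2 ≤ 16*t^2 := by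
    rw [mul_pow]
    calc (4*t^2*u - 2*c*t*d)^2*(u + v)^2 ≤ (16*t^2)*1 :=
          mul_le_mul bX bY (sq_nonneg _) (by positivity)
      _ = 16*t^2 := by ring
  have e2sq : (h^2 - g^2)^2*(h^2 + g^2)^2 = ((4*t^2*u - 2*c*t*d)*(u + v))^2 := by
    rw [← mul_pow, e2]
  nlinarith [e2sq, bXY, hH2, sq_nonneg (h^2 - g^2)]
private lemma st_ba (t u g h : ℝ) (p1 : (h^2 - g^2)^2 ≤ 16*t^2) (hu2 : 4*u^2 ≤ 1) :
    u^2*(h^2 - g^2)^2 ≤ 4*t^2 := by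
  nlinarith [p1, hu2, sq_nonneg (h^2 - g^2), sq_nonneg u, sq_nonneg t]
private lemma st_bb2 (c t d u g : ℝ) (bb : (2*t^2*u - c*t*d)^2 ≤ 4*t^2) (hg4le : g^4 ≤ 1)
    (hg0 : 0 < g) : (2*t^2*u - c*t*d)^2*g^4 ≤ 4*t^2 := by
  nlinarith [bb, sq_nonneg (2*t^2*u - c*t*d),
    mul_le_of_le_one_right (sq_nonneg (2*t^2*u - c*t*d)) hg4le]
private lemma st_bw (c t d u v g h : ℝ)
    (ew : u*h^2 - v*g^2 = u*(h^2 - g^2) + (2*t^2*u - c*t*d)*g^2)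
    (ba : u^2*(h^2 - g^2)^2 ≤ 4*t^2)
    (bb2 : (2*t^2*u - c*t*d)^2*g^4 ≤ 4*t^2) :
    (u*h^2 - v*g^2)^2 ≤ 16*t^2 := by
  have ew2 : (u*h^2 - v*g^2)^2 = (u*(h^2 - g^2) + (2*t^2*u - c*t*d)*g^2)^2 := by rw [ew]
  nlinarith [ew2, ba, bb2, sq_nonneg (u*(h^2 - g^2) - (2*t^2*u - c*t*d)*g^2)]
private lemma st_bctdw (c t d u v g h : ℝ)
    (hx2 : (c*t*d)^2 ≤ t^2) (bw : (u*h^2 - v*g^2)^2 ≤ 16*t^2) :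
    2*(c*t*d)*(u*h^2 - v*g^2) ≤ 17*t^2 := by
  nlinarith [sq_nonneg (c*t*d - (u*h^2 - v*g^2)), hx2, bw]
private lemma st_bnM (u v : ℝ) (hu2 : 4*u^2 ≤ 1) (bY : (u + v)^2 ≤ 1) : u*(u + v) ≤ 1/2 := by
  nlinarith [hu2, bY, sq_nonneg (u*(u + v) - 1/2)]
private lemma st_bE (u v g h : ℝ) (bnM : u*(u + v) ≤ 1/2) (hg2le : g^2 ≤ 1) (hg4le : g^4 ≤ 1)
    (hh2le : h^2 ≤ 1) (hg0 : 0 < g) :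
    4*u*(u + v)*g^2 + 2*g^4*(h^2 + g^2) ≤ 10 := by
  nlinarith [bnM, hg2le, hg4le, hh2le, sq_nonneg g]
private lemma st_fin (t T g h : ℝ) (bH : (1:ℝ) ≤ h^2 + g^2)
    (h2 : T*(h^2 + g^2) ≤ 27*t^2) : T ≤ 100*t^2 := by
  rcases le_or_gt T 0 with hT0 | hT0
  · nlinarith [sq_nonneg t]
  · have h1 : T ≤ T*(h^2 + g^2) := le_mul_of_one_le_right hT0.le bH
    nlinarith [sq_nonneg t]

private lemma l4_atom (c t d u v g h : ℝ)
    (e0 : c^2 + t^2 = 1) (hu2 : 4*u^2 ≤ 1) (hv2 : 4*v^2 ≤ 1) (hd2 : d^2 ≤ 1)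
    (hg4le : g^4 ≤ 1) (hg4ge : 1 ≤ 2*g^4) (hh4le : h^4 ≤ 1) (hh4ge : 1 ≤ 2*h^4)
    (hg0 : 0 < g) (hh0 : 0 < h)
    (e1 : c*t*d = v - u + 2*t^2*u)
    (e2 : (h^2 - g^2)*(h^2 + g^2) = (4*t^2*u - 2*c*t*d)*(u + v)) :
    g^2*(h^2 - g^2) + 2*(c*u*d + t*g^4)*t ≤ 100*t^2 := by
  have ht2 := st_ht2 c t e0
  have hc2 : c^2 ≤ 1 := st_ht2 t c (by linarith)
  have hg2ge := st_g2ge g hg4ge hg0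
  have hg2le := st_g2le g hg4le hg0
  have hh2ge := st_g2ge h hh4ge hh0
  have hh2le := st_g2le h hh4le hh0
  have hcd := st_hcd c d hc2 hd2
  have hti := st_hti c t d hcd
  have ht4u := st_ht4u t u ht2 hu2
  have bX := st_bX c t d u ht4u hti
  have bY := st_bY u v hu2 hv2
  have bH : (1:ℝ) ≤ h^2 + g^2 := by linarith
  have hH2 : (1:ℝ) ≤ (h^2 + g^2)^2 := by nlinarith [bH]
  have p1 := st_p1 c t d u v g h e2 bX bY hH2
  have ew : u*h^2 - v*g^2 = u*(h^2 - g^2) + (2*t^2*u - c*t*d)*g^2 := by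
    linear_combination g^2*e1
  have ba := st_ba t u g h p1 hu2
  have bb := st_bb c t d u ht4u hti
  have bb2 := st_bb2 c t d u g bb hg4le hg0
  have bw := st_bw c t d u v g h ew ba bb2
  have hx2 : (c*t*d)^2 ≤ t^2 := by nlinarith [hti]
  have bctdw := st_bctdw c t d u v g h hx2 bw
  have bnM := st_bnM u v hu2 bY
  have bE := st_bE u v g h bnM hg2le hg4le hh2le hg0
  have e4 : (g^2*(h^2 - g^2) + 2*(c*u*d)*t + 2*t^2*g^4)*(h^2 + g^2)
      = 2*(c*t*d)*(u*h^2 - v*g^2) + t^2*(4*u*(u + v)*g^2 + 2*g^4*(h^2 + g^2)) := by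
    linear_combination g^2*e2
  have h2 : (g^2*(h^2 - g^2) + 2*(c*u*d)*t + 2*t^2*g^4)*(h^2 + g^2) ≤ 27*t^2 := by
    rw [e4]
    have hE : t^2*(4*u*(u + v)*g^2 + 2*g^4*(h^2 + g^2)) ≤ t^2*10 :=
      mul_le_mul_of_nonneg_left bE (sq_nonneg t)
    linarith
  have := st_fin t (g^2*(h^2 - g^2) + 2*(c*u*d)*t + 2*t^2*g^4) g h bH h2
  linarith [this, (by ring : g^2*(h^2 - g^2) + 2*(c*u*d + t*g^4)*t
      = g^2*(h^2 - g^2) + 2*(c*u*d)*t + 2*t^2*g^4)]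

private lemma l4_core (n0 n1 m0 m1 g h : ℝ) (hn : n0^2 + n1^2 = 1) (hm : m0^2 + m1^2 = 1)
    (hg : g^4 = n0^4 + n1^4) (hh : h^4 = m0^4 + m1^4) (hg0 : 0 < g) (hh0 : 0 < h) :
    g^2*(h^2 - g^2) + 2*(n0^3*m1 - n1^3*m0)*(n0*m1 - n1*m0)
      ≤ 100*(n0*m1 - n1*m0)^2 := by
  have e3 : n0^3*m1 - n1^3*m0
      = (n0*m0 + n1*m1)*(n0*n1)*(n0^2 - n1^2) + (n0*m1 - n1*m0)*g^4 := by
    linear_combination (n1^3*m0 - n0^3*m1)*hn - (n0*m1 - n1*m0)*hg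
  rw [e3]
  apply l4_atom (n0*m0 + n1*m1) (n0*m1 - n1*m0) (n0^2 - n1^2) (n0*n1) (m0*m1) g h
  · linear_combination (m1^2 + m0^2)*hn + hm
  · nlinarith [sq_nonneg (n0^2 - n1^2)]
  · nlinarith [sq_nonneg (m0^2 - m1^2)]
  · nlinarith [sq_nonneg (n0*n1)]
  · rw [hg]; nlinarith [sq_nonneg (n0*n1)]
  · rw [hg]; nlinarith [sq_nonneg (n0^2 - n1^2)]
  · rw [hh]; nlinarith [sq_nonneg (m0*m1)]
  · rw [hh]; nlinarith [sq_nonneg (m0^2 - m1^2)]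
  · exact hg0
  · exact hh0
  · linear_combination (m0*m1 + n1^2*m0*m1 - n0*n1*m1^2 - n0*n1*m0^2 + n0^2*m0*m1)*hn
      + (-(n0*n1))*hm
  · linear_combination hh - hg
      + (-1 + 2*m0^2*m1^2 - n1^2 + 2*n1^2*m0^2*m1^2 + 2*n0*n1*m0*m1 - 2*n0*n1*m0*m1^3
         - 2*n0*n1*m0^3*m1 + 2*n0*n1^3*m0*m1 + n0^2 - 2*n0^2*m1^2 - 2*n0^2*m0^2
         + 2*n0^2*m0^2*m1^2 - 2*n0^2*n1^2*m1^2 - 2*n0^2*n1^2*m0^2 + 2*n0^3*n1*m0*m1)*hn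
      + (1 + m1^2 + m0^2 - 2*n0*n1*m0*m1 - 2*n0^2 + 2*n0^4)*hm

private lemma gam4_pow4 (n : Fin 2 → ℝ) (hp : 0 < n 0 ^ 4 + n 1 ^ 4) :
    gam4 n ^ 4 = n 0 ^ 4 + n 1 ^ 4 := by
  rw [gam4, ← Real.rpow_natCast ((n 0 ^ 4 + n 1 ^ 4) ^ ((1:ℝ)/4)) 4,
    ← Real.rpow_mul hp.le]
  norm_num

private lemma gam4_pos (n : Fin 2 → ℝ) (hp : 0 < n 0 ^ 4 + n 1 ^ 4) : 0 < gam4 n :=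
  Real.rpow_pos_of_pos hp _

private lemma dot_perp (n m : Fin 2 → ℝ) :
    n ⬝ᵥ perp m = n 0 * m 1 - n 1 * m 0 := by
  simp [perp, dotProduct, Fin.sum_univ_two]
  ring

private lemma xi_dot_perp (n m : Fin 2 → ℝ) :
    xi4 n ⬝ᵥ perp m = (gam4 n ^ 3)⁻¹ * (n 0 ^ 3 * m 1 - n 1 ^ 3 * m 0) := by
  simp [xi4, perp, dotProduct, Fin.sum_univ_two]
  ring

private lemma F4_expr (n m : Fin 2 → ℝ) :
    F4 n m = (gam4 m ^ 2 - gam4 n ^ 2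
        + 2 * gam4 n * ((gam4 n ^ 3)⁻¹ * (n 0 ^ 3 * m 1 - n 1 ^ 3 * m 0))
          * (n 0 * m 1 - n 1 * m 0)) /
      (gam4 n * (n 0 * m 1 - n 1 * m 0) ^ 2) := by
  rw [F4, xi_dot_perp, dot_perp]

private lemma unit_pos4 (n : Fin 2 → ℝ) (hn : n 0 ^ 2 + n 1 ^ 2 = 1) :
    0 < n 0 ^ 4 + n 1 ^ 4 := by
  nlinarith [sq_nonneg (n 0 ^ 2 - n 1 ^ 2)]

private lemma F4_hat_val (n : Fin 2 → ℝ) (hn : n 0 ^ 2 + n 1 ^ 2 = 1)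
    (hne : n 0 ^ 2 ≠ n 1 ^ 2) :
    F4 n ![n 1, n 0] = 2 * (gam4 n ^ 3)⁻¹ := by
  have hp := unit_pos4 n hn
  have hg0 := gam4_pos n hp
  have hgam : gam4 ![n 1, n 0] = gam4 n := by
    rw [gam4, gam4]
    norm_num [add_comm]
  rw [F4_expr, hgam]
  have hm0 : (![n 1, n 0] : Fin 2 → ℝ) 0 = n 1 := rfl
  have hm1 : (![n 1, n 0] : Fin 2 → ℝ) 1 = n 0 := rfl
  rw [hm0, hm1]
  have hd : n 0 * n 0 - n 1 * n 1 = n 0 ^ 2 - n 1 ^ 2 := by ring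
  have hdne : n 0 ^ 2 - n 1 ^ 2 ≠ 0 := sub_ne_zero_of_ne hne
  have h4 : n 0 ^ 3 * n 0 - n 1 ^ 3 * n 1 = n 0 ^ 2 - n 1 ^ 2 := by
    linear_combination (n 0 ^ 2 - n 1 ^ 2) * hn
  rw [hd, h4]
  set d := n 0 ^ 2 - n 1 ^ 2 with hdd
  field_simp
  ring

private lemma F4_hat_val' (n : Fin 2 → ℝ) (hn : n 0 ^ 2 + n 1 ^ 2 = 1)
    (hne : n 0 ^ 2 ≠ n 1 ^ 2) :
    F4 n ![-n 1, -n 0] = 2 * (gam4 n ^ 3)⁻¹ := by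
  have hp := unit_pos4 n hn
  have hg0 := gam4_pos n hp
  have hgam : gam4 ![-n 1, -n 0] = gam4 n := by
    have hb : (![-n 1, -n 0] : Fin 2 → ℝ) 0 ^ 4 + (![-n 1, -n 0] : Fin 2 → ℝ) 1 ^ 4
        = n 0 ^ 4 + n 1 ^ 4 := by norm_num; ring
    rw [gam4, gam4, hb]
  rw [F4_expr, hgam]
  have hm0 : (![-n 1, -n 0] : Fin 2 → ℝ) 0 = -n 1 := rfl
  have hm1 : (![-n 1, -n 0] : Fin 2 → ℝ) 1 = -n 0 := rfl
  rw [hm0, hm1]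
  have hd : n 0 * (-n 0) - n 1 * (-n 1) = -(n 0 ^ 2 - n 1 ^ 2) := by ring
  have hdne : n 0 ^ 2 - n 1 ^ 2 ≠ 0 := sub_ne_zero_of_ne hne
  have h4 : n 0 ^ 3 * (-n 0) - n 1 ^ 3 * (-n 1) = -(n 0 ^ 2 - n 1 ^ 2) := by
    linear_combination (n 1 ^ 2 - n 0 ^ 2) * hn
  rw [hd, h4]
  set d := n 0 ^ 2 - n 1 ^ 2 with hdd
  field_simp
  ring

private lemma F4_le_bound (n m : Fin 2 → ℝ) (hn : n 0 ^ 2 + n 1 ^ 2 = 1)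
    (hm : m 0 ^ 2 + m 1 ^ 2 = 1) : F4 n m ≤ 400 := by
  have hpn := unit_pos4 n hn
  have hpm := unit_pos4 m hm
  have hg0 := gam4_pos n hpn
  have hh0 := gam4_pos m hpm
  have hg4 := gam4_pow4 n hpn
  have hh4 := gam4_pow4 m hpm
  rw [F4_expr]
  rcases eq_or_ne (n 0 * m 1 - n 1 * m 0) 0 with ht | ht
  · rw [ht]
    norm_num
  · have key := l4_core (n 0) (n 1) (m 0) (m 1) (gam4 n) (gam4 m) hn hm hg4 hh4 hg0 hh0
    have hg4ge : 1 ≤ 2 * gam4 n ^ 4 := by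
      rw [hg4]; nlinarith [sq_nonneg (n 0 ^ 2 - n 1 ^ 2)]
    have hg2ge : (7:ℝ)/10 ≤ gam4 n ^ 2 := st_g2ge _ hg4ge hg0
    have hgge : (4:ℝ)/5 ≤ gam4 n := by nlinarith [hg0, hg2ge]
    have hg3 : 1 ≤ 4 * gam4 n ^ 3 := by nlinarith [hgge, hg0]
    set g := gam4 n with hgdef
    set h := gam4 m with hhdef
    set t := n 0 * m 1 - n 1 * m 0 with htdef
    set s := n 0 ^ 3 * m 1 - n 1 ^ 3 * m 0 with hsdef
    have ht2 : 0 < t ^ 2 := lt_of_le_of_ne (sq_nonneg t) (Ne.symm (pow_ne_zero 2 ht))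
    rw [div_le_iff₀ (by positivity)]
    have hsh : h ^ 2 - g ^ 2 + 2 * g * ((g ^ 3)⁻¹ * s) * t
        = h ^ 2 - g ^ 2 + 2 * s * t / g ^ 2 := by
      field_simp
    rw [hsh]
    have e : (h ^ 2 - g ^ 2 + 2 * s * t / g ^ 2) * g ^ 2 = g ^ 2 * (h ^ 2 - g ^ 2) + 2 * s * t := by
      field_simp
    have b2 : 100 * t ^ 2 ≤ (400 * (g * t ^ 2)) * g ^ 2 := by
      nlinarith [mul_nonneg (by linarith : (0:ℝ) ≤ 4 * g ^ 3 - 1) (sq_nonneg t)]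
    have hgsq : 0 < g ^ 2 := by positivity
    have hNg : (h ^ 2 - g ^ 2 + 2 * s * t / g ^ 2) * g ^ 2 ≤ (400 * (g * t ^ 2)) * g ^ 2 := by
      rw [e]
      linarith [key, b2]
    exact le_of_mul_le_mul_right hNg hgsq


/-- Taking n̂ = (n₂, n₁) gives F(n, n̂) = 2 γ(n)⁻³; hence the minimal stabilizing
function satisfies k₀(n) ≥ 2 γ(n)⁻³. -/
theorem l4_kmin_lower_bound (n : Fin 2 → ℝ) (hn : n ⬝ᵥ n = 1)
    (hne : n 0 ^ 2 ≠ n 1 ^ 2) :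
    F4 n ![n 1, n 0] = 2 * (gam4 n ^ 3)⁻¹ ∧
    2 * (gam4 n ^ 3)⁻¹ ≤
      sSup (F4 n '' {m : Fin 2 → ℝ | m ⬝ᵥ m = 1 ∧ 0 ≤ m ⬝ᵥ n}) := by
  have hn' : n 0 ^ 2 + n 1 ^ 2 = 1 := by
    simp [dotProduct, Fin.sum_univ_two] at hn
    linear_combination hn
  refine ⟨F4_hat_val n hn' hne, ?_⟩
  apply le_csSup
  · refine ⟨400, ?_⟩
    rintro x ⟨m, ⟨hm1, _⟩, rfl⟩
    have hm' : m 0 ^ 2 + m 1 ^ 2 = 1 := by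
      simp [dotProduct, Fin.sum_univ_two] at hm1
      linear_combination hm1
    exact F4_le_bound n m hn' hm'
  · rcases le_or_gt 0 (n 0 * n 1) with hpos | hneg
    · refine ⟨![n 1, n 0], ⟨?_, ?_⟩, F4_hat_val n hn' hne⟩
      · simp [dotProduct, Fin.sum_univ_two]
        linear_combination hn'
      · simp [dotProduct, Fin.sum_univ_two]
        nlinarith [hpos]
    · refine ⟨![-n 1, -n 0], ⟨?_, ?_⟩, F4_hat_val' n hn' hne⟩
      · simp [dotProduct, Fin.sum_univ_two]
        linear_combination hn'
      · simp [dotProduct, Fin.sum_univ_two]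
        nlinarith [hneg]
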